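/- If (A1,B1) is an (a,b)-loom and (A2,B2) is a (c,b)-loom on disjoint vertex sets, then (A1 * A2, B1 ∪ B2) is an (a+c, b)-loom, where A1 * A2 = {e ∪ f : e ∈ A1, f ∈ A2}. -/

import Mathlib

open Finset

variable {V : Type*} [DecidableEq V]

/-- The vertex set of a hypergraph: the union of its edges. -/
def vertsH (H : Set (Finset V)) : Set V := ⋃ e ∈ H, (e : Set V)

/-- `c` is a cover of the hypergraph `H`: it meets every edge. -/
def IsCoverH (H : Set (Finset V)) (c : Finset V) : Prop := ∀ e ∈ H, (c ∩ e).Nonempty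

/-- The covering number of `H` equals `k`. -/
def CoverNumIs (H : Set (Finset V)) (k : ℕ) : Prop :=
  (∃ c, IsCoverH H c ∧ c.card = k) ∧ ∀ c, IsCoverH H c → k ≤ c.card

/-- `Ck H k` is the set of covers of `H` of size exactly `k`. -/
def Ck (H : Set (Finset V)) (k : ℕ) : Set (Finset V) := {c | c.card = k ∧ IsCoverH H c}

/-- `H` is `r`-uniform. -/
def UniformH (H : Set (Finset V)) (r : ℕ) : Prop := ∀ e ∈ H, e.card = r

/-- Orthogonality of hypergraphs: every pair of edges meets in exactly one vertex. -/
def OrthH (A B : Set (Finset V)) : Prop := ∀ a ∈ A, ∀ b ∈ B, (a ∩ b).card = 1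

/-- An `(r,s)`-loom. -/
def IsLoom (r s : ℕ) (A B : Set (Finset V)) : Prop :=
  1 ≤ r ∧ 1 ≤ s ∧ OrthH A B ∧ UniformH A r ∧ UniformH B s ∧
    CoverNumIs A s ∧ CoverNumIs B r ∧ A = Ck B r ∧ B = Ck A s
/-- The join of two hypergraphs. -/
def joinH (A C : Set (Finset V)) : Set (Finset V) := {x | ∃ a ∈ A, ∃ c ∈ C, x = a ∪ c}

/-! A minimal cover of a hypergraph lies inside its vertex set, so covers of `B1 ∪ B2` split
into a cover of `B1` and a cover of `B2`; this makes the minimal covers of `B1 ∪ B2` exactly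
the unions `e ∪ f` of minimal covers, i.e. the join `A1 * A2`. Dually, a set meets every
`e ∪ f` iff it meets every `e` or every `f`, so the minimal covers of the join are those of
`A1` together with those of `A2`, i.e. `B1 ∪ B2`. -/

section Hypergraph

variable {A C B B1 B2 : Set (Finset V)} {x : Finset V} {r s : ℕ}

omit [DecidableEq V] in
lemma coe_subset_vertsH {e : Finset V} (he : e ∈ B) : (e : Set V) ⊆ vertsH B :=
  fun _ hv => Set.mem_biUnion he hv

lemma IsCoverH.mono {y : Finset V} (hx : IsCoverH B x) (hxy : x ⊆ y) : IsCoverH B y :=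
  fun e he => (hx e he).mono (inter_subset_inter_right hxy)

lemma isCoverH_union_iff : IsCoverH (B1 ∪ B2) x ↔ IsCoverH B1 x ∧ IsCoverH B2 x :=
  ⟨fun h => ⟨fun e he => h e (Or.inl he), fun e he => h e (Or.inr he)⟩,
    fun h e he => he.elim (h.1 e) (h.2 e)⟩

lemma isCoverH_joinH_iff : IsCoverH (joinH A C) x ↔ IsCoverH A x ∨ IsCoverH C x := by
  constructor
  · intro hx
    by_contra! h
    obtain ⟨⟨e, he, hex⟩, ⟨f, hf, hfx⟩⟩ :
        (∃ e ∈ A, ¬(x ∩ e).Nonempty) ∧ ∃ f ∈ C, ¬(x ∩ f).Nonempty := by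
      simpa only [IsCoverH, not_forall, exists_prop] using h
    obtain ⟨v, hv⟩ := hx (e ∪ f) ⟨e, he, f, hf, rfl⟩
    rw [inter_union_distrib_left, mem_union] at hv
    exact hv.elim (fun hv => hex ⟨v, hv⟩) (fun hv => hfx ⟨v, hv⟩)
  · rintro (h | h) _ ⟨e, he, f, hf, rfl⟩
    · exact (h e he).mono (inter_subset_inter_left subset_union_left)
    · exact (h f hf).mono (inter_subset_inter_left subset_union_right)

lemma Ck_joinH : Ck (joinH A C) r = Ck A r ∪ Ck C r := by
  ext x
  simp only [Ck, Set.mem_union, Set.mem_ofPred_eq, isCoverH_joinH_iff, and_or_left]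

lemma IsCoverH.exists_subset_vertsH (hx : IsCoverH B x) :
    ∃ y ⊆ x, IsCoverH B y ∧ (y : Set V) ⊆ vertsH B := by
  classical
  refine ⟨x.filter (· ∈ vertsH B), filter_subset _ _, fun e he => ?_, fun v hv => ?_⟩
  · obtain ⟨v, hv⟩ := hx e he
    rw [mem_inter] at hv
    exact ⟨v, mem_inter.2 ⟨mem_filter.2 ⟨hv.1, coe_subset_vertsH he hv.2⟩, hv.2⟩⟩
  · exact (mem_filter.1 hv).2

lemma IsCoverH.exists_disjoint_union_subset (hB : Disjoint (vertsH B1) (vertsH B2))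
    (hx : IsCoverH (B1 ∪ B2) x) :
    ∃ x1 x2, IsCoverH B1 x1 ∧ IsCoverH B2 x2 ∧ Disjoint x1 x2 ∧ x1 ∪ x2 ⊆ x := by
  obtain ⟨hx1, hx2⟩ := isCoverH_union_iff.1 hx
  obtain ⟨x1, hsub1, hcov1, hv1⟩ := hx1.exists_subset_vertsH
  obtain ⟨x2, hsub2, hcov2, hv2⟩ := hx2.exists_subset_vertsH
  exact ⟨x1, x2, hcov1, hcov2, disjoint_coe.1 (hB.mono hv1 hv2), union_subset hsub1 hsub2⟩

lemma CoverNumIs.le_card (h : CoverNumIs B r) (hx : IsCoverH B x) : r ≤ x.card :=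
  h.2 x hx

lemma CoverNumIs.coe_subset_vertsH_of_mem_Ck (h : CoverNumIs B r) (hx : x ∈ Ck B r) :
    (x : Set V) ⊆ vertsH B := by
  obtain ⟨y, hyx, hy, hyB⟩ := hx.2.exists_subset_vertsH
  have hcard : x.card ≤ y.card := hx.1 ▸ h.le_card hy
  rwa [← eq_of_subset_of_card_le hyx hcard]

lemma CoverNumIs.add_le_card_of_isCoverH_union (h1 : CoverNumIs B1 r) (h2 : CoverNumIs B2 s)
    (hB : Disjoint (vertsH B1) (vertsH B2)) (hx : IsCoverH (B1 ∪ B2) x) :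
    r + s ≤ x.card := by
  obtain ⟨x1, x2, hx1, hx2, hdisj, hsub⟩ := hx.exists_disjoint_union_subset hB
  calc r + s ≤ x1.card + x2.card := Nat.add_le_add (h1.le_card hx1) (h2.le_card hx2)
    _ = (x1 ∪ x2).card := (card_union_of_disjoint hdisj).symm
    _ ≤ x.card := card_le_card hsub

lemma CoverNumIs.union (h1 : CoverNumIs B1 r) (h2 : CoverNumIs B2 s)
    (hB : Disjoint (vertsH B1) (vertsH B2)) : CoverNumIs (B1 ∪ B2) (r + s) := by
  obtain ⟨x1, hx1, hcard1⟩ := h1.1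
  obtain ⟨x2, hx2, hcard2⟩ := h2.1
  have hv1 := h1.coe_subset_vertsH_of_mem_Ck ⟨hcard1, hx1⟩
  have hv2 := h2.coe_subset_vertsH_of_mem_Ck ⟨hcard2, hx2⟩
  refine ⟨⟨x1 ∪ x2, isCoverH_union_iff.2 ⟨hx1.mono subset_union_left,
    hx2.mono subset_union_right⟩, ?_⟩, fun x hx => h1.add_le_card_of_isCoverH_union h2 hB hx⟩
  rw [card_union_of_disjoint (disjoint_coe.1 (hB.mono hv1 hv2)), hcard1, hcard2]

lemma CoverNumIs.joinH (hA : CoverNumIs A r) (hC : CoverNumIs C r) :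
    CoverNumIs (joinH A C) r := by
  obtain ⟨x, hx, hcard⟩ := hA.1
  exact ⟨⟨x, isCoverH_joinH_iff.2 (Or.inl hx), hcard⟩,
    fun y hy => (isCoverH_joinH_iff.1 hy).elim hA.le_card hC.le_card⟩

lemma joinH_Ck_eq_Ck_union (h1 : CoverNumIs B1 r) (h2 : CoverNumIs B2 s)
    (hB : Disjoint (vertsH B1) (vertsH B2)) :
    joinH (Ck B1 r) (Ck B2 s) = Ck (B1 ∪ B2) (r + s) := by
  ext x
  constructor
  · rintro ⟨e, he, f, hf, rfl⟩
    have hef : Disjoint e f := disjoint_coe.1 <|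
      hB.mono (h1.coe_subset_vertsH_of_mem_Ck he) (h2.coe_subset_vertsH_of_mem_Ck hf)
    exact ⟨by rw [card_union_of_disjoint hef, he.1, hf.1],
      isCoverH_union_iff.2 ⟨he.2.mono subset_union_left, hf.2.mono subset_union_right⟩⟩
  · rintro ⟨hcard, hx⟩
    obtain ⟨x1, x2, hx1, hx2, hdisj, hsub⟩ := hx.exists_disjoint_union_subset hB
    have hle1 := h1.le_card hx1
    have hle2 := h2.le_card hx2
    have hle : x1.card + x2.card ≤ r + s :=
      hcard ▸ card_union_of_disjoint hdisj ▸ card_le_card hsub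
    have hx_eq : x1 ∪ x2 = x :=
      eq_of_subset_of_card_le hsub (by rw [card_union_of_disjoint hdisj]; omega)
    exact ⟨x1, ⟨by omega, hx1⟩, x2, ⟨by omega, hx2⟩, hx_eq.symm⟩

lemma OrthH.joinH_union {A1 A2 : Set (Finset V)} (h1 : OrthH A1 B1) (h2 : OrthH A2 B2)
    (h12 : Disjoint (vertsH A1) (vertsH B2)) (h21 : Disjoint (vertsH A2) (vertsH B1)) :
    OrthH (joinH A1 A2) (B1 ∪ B2) := by
  rintro _ ⟨e, he, f, hf, rfl⟩ g (hg | hg)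
  · have hfg : f ∩ g = ∅ := disjoint_iff_inter_eq_empty.1 <| disjoint_coe.1 <|
      h21.mono (coe_subset_vertsH hf) (coe_subset_vertsH hg)
    rw [union_inter_distrib_right, hfg, union_empty]
    exact h1 e he g hg
  · have heg : e ∩ g = ∅ := disjoint_iff_inter_eq_empty.1 <| disjoint_coe.1 <|
      h12.mono (coe_subset_vertsH he) (coe_subset_vertsH hg)
    rw [union_inter_distrib_right, heg, empty_union]
    exact h2 f hf g hg

omit [DecidableEq V] in
lemma UniformH.union (h1 : UniformH B1 r) (h2 : UniformH B2 r) : UniformH (B1 ∪ B2) r :=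
  fun e he => he.elim (h1 e) (h2 e)

end Hypergraph

/-- the 1-composition of an `(a,b)`-loom and a `(c,b)`-loom on
disjoint vertex sets is an `(a+c,b)`-loom. -/
theorem stmt13 (a b c : ℕ) (A1 B1 A2 B2 : Set (Finset V))
    (h1 : IsLoom a b A1 B1) (h2 : IsLoom c b A2 B2)
    (hd : Disjoint (vertsH A1 ∪ vertsH B1) (vertsH A2 ∪ vertsH B2)) :
    IsLoom (a + c) b (joinH A1 A2) (B1 ∪ B2) := by
  obtain ⟨ha, hb, horth1, -, hunifB1, hcovA1, hcovB1, hA1, hB1⟩ := h1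
  obtain ⟨-, -, horth2, -, hunifB2, hcovA2, hcovB2, hA2, hB2⟩ := h2
  have hB : Disjoint (vertsH B1) (vertsH B2) :=
    hd.mono Set.subset_union_right Set.subset_union_right
  have hjoin : joinH A1 A2 = Ck (B1 ∪ B2) (a + c) := by
    rw [hA1, hA2]
    exact joinH_Ck_eq_Ck_union hcovB1 hcovB2 hB
  refine ⟨by omega, hb, ?_, fun x hx => (hjoin ▸ hx).1, hunifB1.union hunifB2,
    hcovA1.joinH hcovA2, hcovB1.union hcovB2 hB, hjoin, by rw [Ck_joinH, ← hB1, ← hB2]⟩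
  exact horth1.joinH_union horth2 (hd.mono Set.subset_union_left Set.subset_union_right)
    (hd.symm.mono Set.subset_union_left Set.subset_union_right)
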